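/- arXiv:2103.17073 — 4 statements merged into one kernel-verified Lean document; each statement's English description precedes it below -/
import Mathlib

section
/- Let $(\mathfrak{g},\{\cdot,\cdot\})$ be a Leibniz algebra, i.e. $\{x,\{y,z\}\}=\{\{x,y\},z\}+\{y,\{x,z\}\}$ for all $x,y,z$. Define the skew-symmetrized bracket $\llbracket x,y\rrbracket = \tfrac12(\{x,y\}-\{y,x\})$ and the Jacobiator $J_{x,y,z} = \llbracket x,\llbracket y,z\rrbracket\rrbracket + \llbracket y,\llbracket z,x\rrbracket\rrbracket + \llbracket z,\llbracket x,y\rrbracket\rrbracket$. Then for all $x,y,z\in\mathfrak{g}$, the Jacobiator $J_{x,y,z}$ lies in the left center $Z(\mathfrak{g})=\{c\in\mathfrak{g}:\{c,y\}=0\ \forall y\}$. -/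
/-!
Leibniz's rule says exactly that left multiplication `L x = br x` turns the bracket into the
commutator of endomorphisms: `L {x, y} = ⁅L x, L y⁆`. Since the right-hand side is skew, `L` kills
symmetric elements, so `L ⟦x, y⟧ = ⁅L x, L y⁆` as well, and `L` maps the Jacobiator of `⟦·, ·⟧` to
the Jacobiator of the Lie algebra `Module.End R g`, which vanishes.
-/

attribute [local instance] LieRing.ofAssociativeRing

section Leibniz

variable {R g : Type*} [AddCommGroup g]

def IsLeibniz [CommRing R] [Module R g] (br : g →ₗ[R] g →ₗ[R] g) : Prop :=
  ∀ x y z : g, br x (br y z) = br (br x y) z + br y (br x z)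

theorem IsLeibniz.map_bracket [CommRing R] [Module R g] {br : g →ₗ[R] g →ₗ[R] g}
    (hleib : IsLeibniz br) (x y : g) : br (br x y) = ⁅br x, br y⁆ := by
  ext z
  rw [Ring.lie_def, LinearMap.sub_apply, Module.End.mul_apply, Module.End.mul_apply, hleib]
  abel

theorem IsLeibniz.map_skew [Field R] [NeZero (2 : R)] [Module R g] {br : g →ₗ[R] g →ₗ[R] g}
    (hleib : IsLeibniz br) (x y : g) : br ((2 : R)⁻¹ • (br x y - br y x)) = ⁅br x, br y⁆ := by
  rw [map_smul, map_sub, hleib.map_bracket, hleib.map_bracket, ← lie_skew (br y) (br x),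
    sub_neg_eq_add, ← two_smul R, smul_smul, inv_mul_cancel₀ two_ne_zero, one_smul]

end Leibniz

/-- The Jacobiator of the skew-symmetrization of a Leibniz bracket lies in the left center. -/
theorem leibniz_jacobiator_mem_leftCenter
    {g : Type*} [AddCommGroup g] [Module ℝ g]
    (br : g →ₗ[ℝ] g →ₗ[ℝ] g)
    (hleib : ∀ x y z : g, br x (br y z) = br (br x y) z + br y (br x z))
    (C : g → g → g)
    (hC : ∀ x y : g, C x y = (2:ℝ)⁻¹ • (br x y - br y x))
    (J : g → g → g → g)
    (hJ : ∀ x y z : g, J x y z = C x (C y z) + C y (C z x) + C z (C x y)) :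
    ∀ x y z w : g, br (J x y z) w = 0 := by
  have hC_lie : ∀ a b : g, br (C a b) = ⁅br a, br b⁆ := fun a b => by
    rw [hC]
    exact IsLeibniz.map_skew hleib a b
  intro x y z w
  have hJ_zero : br (J x y z) = 0 := by
    simp only [hJ, map_add, hC_lie]
    exact lie_jacobi (br x) (br y) (br z)
  rw [hJ_zero, LinearMap.zero_apply]
end

section
/- Let $V$ be a vector space over a field of characteristic $0$. Define on the 2-term complex $V\hookrightarrow \mathfrak{gl}(V)\oplus V$ (with differential the inclusion $v\mapsto 0+v$) the brackets $l_2(A+u,B+v)=[A,B]_C+\tfrac12(Av-Bu)$, $l_2(A+u,v)=\tfrac12 Av$, and $l_3(A+u,B+v,C+w)=-\tfrac14([A,B]_C w+[B,C]_C u+[C,A]_C v)$. Then these data satisfy the axioms of a 2-term $L_\infty$-algebra: (1) $d\,l_2(x,a)=l_2(x,da)$ and $l_2(da,b)=l_2(a,db)$; (2) the sum of cyclic permutations of $l_2(l_2(x,y),z)$ equals $-d\,l_3(x,y,z)$; (3) the sum of cyclic permutations of $l_2(l_2(x,y),a)$ equals $-l_3(x,y,da)$; (4) the degree-4 coherence identity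 for $l_3$ holds. -/
/-- A 2-term L∞-algebra structure on the complex `d : g1 → g0`. -/
structure IsL2Alg (K : Type*) [Field K] {g0 g1 : Type*} [AddCommGroup g0] [Module K g0]
    [AddCommGroup g1] [Module K g1]
    (d : g1 → g0) (l2 : g0 → g0 → g0) (l2m : g0 → g1 → g1)
    (l3 : g0 → g0 → g0 → g1) : Prop where
  d_lin : IsLinearMap K d
  l2_lin : ∀ x, IsLinearMap K (l2 x)
  l2_lin' : ∀ y, IsLinearMap K (fun x => l2 x y)
  l2m_lin : ∀ x, IsLinearMap K (l2m x)
  l2m_lin' : ∀ a, IsLinearMap K (fun x => l2m x a)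
  l3_lin : ∀ x y, IsLinearMap K (l3 x y)
  l3_lin' : ∀ y z, IsLinearMap K (fun x => l3 x y z)
  l2_skew : ∀ x y, l2 x y = - l2 y x
  l3_skew12 : ∀ x y z, l3 x y z = - l3 y x z
  l3_skew23 : ∀ x y z, l3 x y z = - l3 x z y
  ax_chain : ∀ x a, d (l2m x a) = l2 x (d a)
  ax_mixed : ∀ a b, l2m (d a) b = - l2m (d b) a
  ax_jac0 : ∀ x y z, l2 (l2 x y) z + l2 (l2 y z) x + l2 (l2 z x) y = - d (l3 x y z)
  ax_jac1 : ∀ x y a, l2m (l2 x y) a - l2m x (l2m y a) + l2m y (l2m x a) = - l3 x y (d a)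
  ax_l3 : ∀ w x y z,
    l3 (l2 w x) y z - l3 (l2 w y) x z + l3 (l2 w z) x y + l3 (l2 x y) w z
      + l3 (l2 y z) w x - l3 (l2 x z) w y
      + l2m z (l3 w x y) + l2m x (l3 w y z) - l2m y (l3 w x z) - l2m w (l3 x y z) = 0

/-!
Every axiom is an identity between sums of words in the operator components applied to one vector
component. The coefficients enter only through `¼ = ½ - ½ · ½`, which holds in every field (in
characteristic 2 both sides are `0`, as `2⁻¹ = 0`). After this substitution each axiom holds with
`½` treated as a formal variable; the operator part of the Jacobi identity is the Jacobi identity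
of the commutator in `Module.End K V`.
-/

lemma inv_four_eq_inv_two_sub_inv_two_mul_inv_two {K : Type*} [DivisionRing K] :
    (4 : K)⁻¹ = 2⁻¹ - 2⁻¹ * 2⁻¹ := by
  rw [show (4 : K) = 2 * 2 by norm_num, mul_inv_rev]
  rcases eq_or_ne (2 : K) 0 with h | h
  · simp [h]
  · rw [eq_sub_iff_add_eq, ← two_mul, mul_inv_cancel_left₀ h]

namespace OmniLie

variable {K : Type*} [Field K] {V : Type*} [AddCommGroup V] [Module K V]

def bracket (e f : Module.End K V × V) : Module.End K V × V :=
  (e.1 * f.1 - f.1 * e.1, (2 : K)⁻¹ • (e.1 f.2 - f.1 e.2))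

def action (e : Module.End K V × V) (v : V) : V := (2 : K)⁻¹ • (e.1 v)

def ternaryBracket (e f h : Module.End K V × V) : V :=
  (-(4 : K)⁻¹) • ((e.1 * f.1 - f.1 * e.1) h.2 + (f.1 * h.1 - h.1 * f.1) e.2
    + (h.1 * e.1 - e.1 * h.1) f.2)

@[simp]
lemma bracket_fst (e f : Module.End K V × V) : (bracket e f).1 = e.1 * f.1 - f.1 * e.1 := rfl

@[simp]
lemma bracket_snd (e f : Module.End K V × V) :
    (bracket e f).2 = (2 : K)⁻¹ • (e.1 f.2 - f.1 e.2) := rfl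

lemma bracket_anticomm (e f : Module.End K V × V) : bracket e f = -bracket f e := by
  ext1 <;> simp only [bracket_fst, bracket_snd, Prod.fst_neg, Prod.snd_neg] <;> module

lemma isLinearMap_bracket (e : Module.End K V × V) : IsLinearMap K (bracket e) where
  map_add f g := by
    ext1
    · simp only [bracket_fst, Prod.fst_add]
      noncomm_ring
    · simp only [bracket_snd, Prod.fst_add, Prod.snd_add, map_add, LinearMap.add_apply]
      module
  map_smul c f := by
    ext1 <;> simp only [bracket_fst, bracket_snd, Prod.smul_fst, Prod.smul_snd, map_smul,
      mul_smul_comm, smul_mul_assoc, LinearMap.smul_apply] <;> module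

lemma isLinearMap_bracket_left (f : Module.End K V × V) : IsLinearMap K (bracket · f) where
  map_add e e' := by simp only [bracket_anticomm _ f, (isLinearMap_bracket f).map_add, neg_add]
  map_smul c e := by simp only [bracket_anticomm _ f, (isLinearMap_bracket f).map_smul, smul_neg]

lemma isLinearMap_action (e : Module.End K V × V) : IsLinearMap K (action e) where
  map_add u v := by simp only [action, map_add, smul_add]
  map_smul c v := by simp only [action, map_smul, smul_comm c (2 : K)⁻¹]

lemma isLinearMap_action_left (v : V) :
    IsLinearMap K fun e : Module.End K V × V => action e v where
  map_add e e' := by simp only [action, Prod.fst_add, LinearMap.add_apply, smul_add]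
  map_smul c e := by
    simp only [action, Prod.smul_fst, LinearMap.smul_apply, smul_comm c (2 : K)⁻¹]

lemma ternaryBracket_swap_left (e f h : Module.End K V × V) :
    ternaryBracket e f h = -ternaryBracket f e h := by
  simp only [ternaryBracket, LinearMap.sub_apply, Module.End.mul_apply]
  module

lemma ternaryBracket_swap_right (e f h : Module.End K V × V) :
    ternaryBracket e f h = -ternaryBracket e h f := by
  simp only [ternaryBracket, LinearMap.sub_apply, Module.End.mul_apply]
  module

lemma ternaryBracket_rotate (e f h : Module.End K V × V) :
    ternaryBracket e f h = ternaryBracket f h e := by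
  simp only [ternaryBracket, LinearMap.sub_apply, Module.End.mul_apply]
  module

lemma isLinearMap_ternaryBracket (e f : Module.End K V × V) :
    IsLinearMap K (ternaryBracket e f) where
  map_add h h' := by
    simp only [ternaryBracket, Prod.fst_add, Prod.snd_add, mul_add, add_mul, map_add,
      LinearMap.add_apply, LinearMap.sub_apply, Module.End.mul_apply]
    module
  map_smul c h := by
    simp only [ternaryBracket, Prod.smul_fst, Prod.smul_snd, mul_smul_comm, smul_mul_assoc,
      map_smul, LinearMap.smul_apply, LinearMap.sub_apply, Module.End.mul_apply]
    module

lemma isLinearMap_ternaryBracket_left (f h : Module.End K V × V) :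
    IsLinearMap K (ternaryBracket · f h) := by
  convert isLinearMap_ternaryBracket f h using 1
  exact funext fun e => ternaryBracket_rotate e f h

lemma bracket_inr (e : Module.End K V × V) (a : V) : bracket e (0, a) = (0, action e a) := by
  ext1 <;> simp [action]

lemma bracket_jacobi (x y z : Module.End K V × V) :
    bracket (bracket x y) z + bracket (bracket y z) x + bracket (bracket z x) y
      = -((0 : Module.End K V), ternaryBracket x y z) := by
  ext1
  · simp only [Prod.fst_add, bracket_fst, Prod.fst_neg, neg_zero]
    noncomm_ring
  · simp only [Prod.snd_add, bracket_snd, Prod.snd_neg, bracket_fst, ternaryBracket,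
      inv_four_eq_inv_two_sub_inv_two_mul_inv_two, Module.End.mul_apply, LinearMap.sub_apply,
      map_sub, map_smul]
    module

lemma action_jacobi (x y : Module.End K V × V) (a : V) :
    action (bracket x y) a - action x (action y a) + action y (action x a)
      = -ternaryBracket x y ((0 : Module.End K V), a) := by
  simp only [ternaryBracket, bracket_fst, action, inv_four_eq_inv_two_sub_inv_two_mul_inv_two,
    Module.End.mul_apply, LinearMap.sub_apply, map_smul, LinearMap.zero_apply, zero_mul, mul_zero,
    sub_zero, add_zero]
  module

lemma ternaryBracket_coherence (w x y z : Module.End K V × V) :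
    ternaryBracket (bracket w x) y z - ternaryBracket (bracket w y) x z
      + ternaryBracket (bracket w z) x y + ternaryBracket (bracket x y) w z
      + ternaryBracket (bracket y z) w x - ternaryBracket (bracket x z) w y
      + action z (ternaryBracket w x y) + action x (ternaryBracket w y z)
      - action y (ternaryBracket w x z) - action w (ternaryBracket x y z) = 0 := by
  simp only [ternaryBracket, bracket_fst, bracket_snd, action, Module.End.mul_apply,
    LinearMap.sub_apply, map_add, map_sub, map_smul]
  module

end OmniLie

open OmniLie in
theorem omniLie_isL2Alg_general
    (K : Type*) [Field K] (V : Type*) [AddCommGroup V] [Module K V] :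
    IsL2Alg K (g0 := Module.End K V × V) (g1 := V)
      (fun v => ((0 : Module.End K V), v))
      (fun e f => (e.1 * f.1 - f.1 * e.1, (2:K)⁻¹ • (e.1 f.2 - f.1 e.2)))
      (fun e v => (2:K)⁻¹ • (e.1 v))
      (fun e f h => (-(4:K)⁻¹) • ((e.1 * f.1 - f.1 * e.1) h.2
        + (f.1 * h.1 - h.1 * f.1) e.2 + (h.1 * e.1 - e.1 * h.1) f.2)) :=
  { d_lin := (LinearMap.inr K (Module.End K V) V).isLinear
    l2_lin := isLinearMap_bracket
    l2_lin' := isLinearMap_bracket_left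
    l2m_lin := isLinearMap_action
    l2m_lin' := isLinearMap_action_left
    l3_lin := isLinearMap_ternaryBracket
    l3_lin' := isLinearMap_ternaryBracket_left
    l2_skew := bracket_anticomm
    l3_skew12 := ternaryBracket_swap_left
    l3_skew23 := ternaryBracket_swap_right
    ax_chain e a := (bracket_inr e a).symm
    ax_mixed a b := by simp
    ax_jac0 := bracket_jacobi
    ax_jac1 := action_jacobi
    ax_l3 := ternaryBracket_coherence }

/-- The omni-Lie algebra of a vector space `V` carries a 2-term L∞-algebra structure. -/
theorem omniLie_isL2Alg
    (K : Type*) [Field K] [CharZero K] (V : Type*) [AddCommGroup V] [Module K V] :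
    IsL2Alg K (g0 := Module.End K V × V) (g1 := V)
      (fun v => ((0 : Module.End K V), v))
      (fun e f => (e.1 * f.1 - f.1 * e.1, (2:K)⁻¹ • (e.1 f.2 - f.1 e.2)))
      (fun e v => (2:K)⁻¹ • (e.1 v))
      (fun e f h => (-(4:K)⁻¹) • ((e.1 * f.1 - f.1 * e.1) h.2
        + (f.1 * h.1 - h.1 * f.1) e.2 + (h.1 * e.1 - e.1 * h.1) f.2)) :=
  omniLie_isL2Alg_general K V
end

section
/- Let $(\mathfrak{g},d,l_2,l_3)$ be a 2-term $L_\infty$-algebra. Define $\mathrm{ad}_0(x)=(l_2(x,\cdot)|_{\mathfrak{g}_0}, l_2(x,\cdot)|_{\mathfrak{g}_{-1}})$, $\mathrm{ad}_1(a)=l_2(a,\cdot):\mathfrak{g}_0\to\mathfrak{g}_{-1}$, and $\mathrm{ad}_2(x,y)=-l_3(x,y,\cdot):\mathfrak{g}_0\to\mathfrak{g}_{-1}$. Then $(\mathrm{ad}_0,\mathrm{ad}_1,\mathrm{ad}_2):\mathfrak{g}\to\mathfrak{gl}(\mathfrak{g})$ is a homomorphism of 2-term $L_\infty$-algebras into the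 strict Lie 2-algebra $\mathfrak{gl}(\mathfrak{g}_{-1}\xrightarrow{d}\mathfrak{g}_0)$ (the adjoint representation). -/
/-- A homomorphism of 2-term L∞-algebras. -/
structure IsL2Hom (K : Type*) [Field K]
    {g0 g1 h0 h1 : Type*} [AddCommGroup g0] [Module K g0] [AddCommGroup g1] [Module K g1]
    [AddCommGroup h0] [Module K h0] [AddCommGroup h1] [Module K h1]
    (dg : g1 → g0) (l2g : g0 → g0 → g0) (l2mg : g0 → g1 → g1) (l3g : g0 → g0 → g0 → g1)
    (dh : h1 → h0) (l2h : h0 → h0 → h0) (l2mh : h0 → h1 → h1) (l3h : h0 → h0 → h0 → h1)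
    (f0 : g0 → h0) (f1 : g1 → h1) (f2 : g0 → g0 → h1) : Prop where
  f0_lin : IsLinearMap K f0
  f1_lin : IsLinearMap K f1
  f2_lin : ∀ x, IsLinearMap K (f2 x)
  f2_skew : ∀ x y, f2 x y = - f2 y x
  chain : ∀ a, f0 (dg a) = dh (f1 a)
  hom2 : ∀ x y, f0 (l2g x y) - l2h (f0 x) (f0 y) = dh (f2 x y)
  hom2m : ∀ x a, f1 (l2mg x a) - l2mh (f0 x) (f1 a) = f2 x (dg a)
  hom3 : ∀ x y z, f1 (l3g x y z) - l3h (f0 x) (f0 y) (f0 z)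
    = l2mh (f0 x) (f2 y z) + l2mh (f0 y) (f2 z x) + l2mh (f0 z) (f2 x y)
      - f2 (l2g x y) z - f2 (l2g y z) x - f2 (l2g z x) y

/-- Pairs of endomorphisms commuting with the differential of a 2-term complex. -/
def glZero (K : Type*) [Field K] {V0 V1 : Type*}
    [AddCommGroup V0] [Module K V0] [AddCommGroup V1] [Module K V1]
    (p : V1 →ₗ[K] V0) : Submodule K (Module.End K V0 × Module.End K V1) where
  carrier := {A | A.1 ∘ₗ p = p ∘ₗ A.2}
  add_mem' := by
    intro a b ha hb
    simp only [Set.mem_setOf_eq, Prod.fst_add, Prod.snd_add] at *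
    simp [LinearMap.add_comp, LinearMap.comp_add, ha, hb]
  zero_mem' := by simp [Set.mem_setOf_eq]
  smul_mem' := by
    intro c a ha
    simp only [Set.mem_setOf_eq, Prod.smul_fst, Prod.smul_snd] at *
    simp [LinearMap.smul_comp, LinearMap.comp_smul, ha]

lemma mem_glZero_iff {K : Type*} [Field K] {V0 V1 : Type*}
    [AddCommGroup V0] [Module K V0] [AddCommGroup V1] [Module K V1]
    (p : V1 →ₗ[K] V0) (A : Module.End K V0 × Module.End K V1) :
    A ∈ glZero K p ↔ A.1 ∘ₗ p = p ∘ₗ A.2 := Iff.rfl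

lemma comm_mem_glZero {K : Type*} [Field K] {V0 V1 : Type*}
    [AddCommGroup V0] [Module K V0] [AddCommGroup V1] [Module K V1]
    (p : V1 →ₗ[K] V0) (A B : Module.End K V0 × Module.End K V1)
    (hA : A ∈ glZero K p) (hB : B ∈ glZero K p) :
    (A.1 * B.1 - B.1 * A.1, A.2 * B.2 - B.2 * A.2) ∈ glZero K p := by
  have hA' : ∀ w, A.1 (p w) = p (A.2 w) := fun w => LinearMap.congr_fun hA w
  have hB' : ∀ w, B.1 (p w) = p (B.2 w) := fun w => LinearMap.congr_fun hB w
  rw [mem_glZero_iff]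
  ext v
  simp [Module.End.mul_apply, LinearMap.comp_apply, LinearMap.sub_apply, hA', hB']

lemma delta_mem_glZero {K : Type*} [Field K] {V0 V1 : Type*}
    [AddCommGroup V0] [Module K V0] [AddCommGroup V1] [Module K V1]
    (p : V1 →ₗ[K] V0) (D : V0 →ₗ[K] V1) :
    ((p ∘ₗ D, D ∘ₗ p) : Module.End K V0 × Module.End K V1) ∈ glZero K p := by
  rw [mem_glZero_iff]
  ext v
  simp [LinearMap.comp_apply]

/-!
Evaluated on elements, every identity required of `(ad₀, ad₁, ad₂)` is one of the axioms of the
2-term L∞-algebra, up to the antisymmetry of `l2` and `l3`: compatibility with the differentials is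
`d [x, a] = [x, d a]` together with `[d a, b] = -[d b, a]`; the failure of `ad₀` to preserve
brackets is the Jacobi identity up to the homotopy `l3` (on `g0` and on `g1`), and so is the
condition relating `ad₁` and `ad₂`; the coherence condition on `ad₂` is the higher Jacobi identity
satisfied by `l3`.
-/

namespace IsL2Alg

variable {K : Type*} [Field K] {g0 g1 : Type*}
  [AddCommGroup g0] [Module K g0] [AddCommGroup g1] [Module K g1]
  {d : g1 →ₗ[K] g0} {l2 : g0 →ₗ[K] g0 →ₗ[K] g0} {l2m : g0 →ₗ[K] g1 →ₗ[K] g1}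
  {l3 : g0 →ₗ[K] g0 →ₗ[K] g0 →ₗ[K] g1}

theorem l3_cycle (h : IsL2Alg K (fun a => d a) (fun x y => l2 x y) (fun x a => l2m x a)
    (fun x y z => l3 x y z)) (x y z : g0) : l3 x y z = l3 z x y := by
  linear_combination (norm := module) h.l3_skew23 x y z - h.l3_skew12 x z y

theorem l3_l2_cycle (h : IsL2Alg K (fun a => d a) (fun x y => l2 x y) (fun x a => l2m x a)
    (fun x y z => l3 x y z)) (x y z w : g0) : l3 x y (l2 z w) = - l3 (l2 w z) x y := by
  rw [h.l3_cycle, h.l2_skew, map_neg, LinearMap.neg_apply, LinearMap.neg_apply]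

theorem adjoint_chain (h : IsL2Alg K (fun a => d a) (fun x y => l2 x y) (fun x a => l2m x a)
    (fun x y z => l3 x y z)) (a : g1) :
    (l2 (d a), l2m (d a)) = (d ∘ₗ (-l2m.flip a), (-l2m.flip a) ∘ₗ d) := by
  refine Prod.ext ?_ ?_ <;> ext b <;>
    simp only [LinearMap.comp_apply, LinearMap.neg_apply, LinearMap.flip_apply, map_neg]
  · rw [h.l2_skew, h.ax_chain]
  · exact h.ax_mixed a b

theorem adjoint_bracket (h : IsL2Alg K (fun a => d a) (fun x y => l2 x y) (fun x a => l2m x a)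
    (fun x y z => l3 x y z)) (x y : g0) :
    (l2 (l2 x y), l2m (l2 x y))
        - (l2 x * l2 y - l2 y * l2 x, l2m x * l2m y - l2m y * l2m x)
      = (d ∘ₗ (-l3 x y), (-l3 x y) ∘ₗ d) := by
  refine Prod.ext ?_ ?_ <;> ext z <;>
    simp only [Prod.fst_sub, Prod.snd_sub, LinearMap.sub_apply, Module.End.mul_apply,
      LinearMap.comp_apply, LinearMap.neg_apply, map_neg]
  · have hyxz : l2 y (l2 x z) = - l2 y (l2 z x) := by rw [h.l2_skew x z, map_neg]
    linear_combination (norm := module)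
      h.ax_jac0 x y z - h.l2_skew (l2 y z) x - h.l2_skew (l2 z x) y + hyxz
  · linear_combination (norm := module) h.ax_jac1 x y z

theorem adjoint_action (h : IsL2Alg K (fun a => d a) (fun x y => l2 x y) (fun x a => l2m x a)
    (fun x y z => l3 x y z)) (x : g0) (a : g1) :
    -l2m.flip (l2m x a) - (l2m x ∘ₗ (-l2m.flip a) - (-l2m.flip a) ∘ₗ l2 x) = -l3 x (d a) := by
  ext y
  simp only [LinearMap.sub_apply, LinearMap.comp_apply, LinearMap.neg_apply,
    LinearMap.flip_apply, map_neg]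
  linear_combination (norm := module) - h.ax_jac1 x y a + h.l3_skew23 x y (d a)

theorem adjoint_homotopy (h : IsL2Alg K (fun a => d a) (fun x y => l2 x y) (fun x a => l2m x a)
    (fun x y z => l3 x y z)) (x y z : g0) :
    -l2m.flip (l3 x y z)
      = (l2m x ∘ₗ (-l3 y z) - (-l3 y z) ∘ₗ l2 x) + (l2m y ∘ₗ (-l3 z x) - (-l3 z x) ∘ₗ l2 y)
        + (l2m z ∘ₗ (-l3 x y) - (-l3 x y) ∘ₗ l2 z)
        - -l3 (l2 x y) z - -l3 (l2 y z) x - -l3 (l2 z x) y := by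
  ext w
  simp only [LinearMap.sub_apply, LinearMap.add_apply, LinearMap.comp_apply,
    LinearMap.neg_apply, LinearMap.flip_apply, map_neg]
  -- every term of `ax_l3 w x y z` is matched up to the total antisymmetry of `l2` and `l3`
  have hy : l2m y (l3 z x w) = - l2m y (l3 w x z) := by rw [h.l3_cycle, h.l3_skew23, map_neg]
  have hzx : l3 (l2 z x) y w = l3 (l2 x z) w y := by
    rw [h.l2_skew, map_neg, LinearMap.neg_apply, LinearMap.neg_apply, h.l3_skew23, neg_neg]
  have hyw : l3 z x (l2 y w) = l3 (l2 w y) x z := by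
    rw [h.l3_l2_cycle, h.l3_skew23, neg_neg]
  linear_combination (norm := module) h.ax_l3 w x y z + congrArg (l2m x) (h.l3_cycle y z w)
    + hy + congrArg (l2m z) (h.l3_cycle x y w) - h.l3_l2_cycle y z x w - hyw
    - h.l3_l2_cycle x y z w - h.l3_skew23 (l2 x y) z w - h.l3_skew23 (l2 y z) x w - hzx

end IsL2Alg

/-- The adjoint representation: a 2-term L∞-algebra maps homomorphically to the strict Lie
2-algebra `gl` of its underlying complex via `ad₀(x) = (l2 x, l2m x)`, `ad₁(a) = [a,·]`,
`ad₂(x,y) = -l3(x,y,·)`. -/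
theorem adjoint_rep_is_L2Hom
    (K : Type*) [Field K] {g0 g1 : Type*}
    [AddCommGroup g0] [Module K g0] [AddCommGroup g1] [Module K g1]
    (d : g1 →ₗ[K] g0) (l2 : g0 →ₗ[K] g0 →ₗ[K] g0) (l2m : g0 →ₗ[K] g1 →ₗ[K] g1)
    (l3 : g0 →ₗ[K] g0 →ₗ[K] g0 →ₗ[K] g1)
    (h : IsL2Alg K (fun a => d a) (fun x y => l2 x y) (fun x a => l2m x a)
      (fun x y z => l3 x y z)) :
    IsL2Hom K
      -- source: the 2-term L∞-algebra g
      (fun a => d a) (fun x y => l2 x y) (fun x a => l2m x a) (fun x y z => l3 x y z)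
      -- target: the strict Lie 2-algebra gl(g₋₁ → g₀)
      (fun (D : g0 →ₗ[K] g1) => (⟨(d ∘ₗ D, D ∘ₗ d), delta_mem_glZero d D⟩ : glZero K d))
      (fun A B => ⟨(A.1.1 * B.1.1 - B.1.1 * A.1.1, A.1.2 * B.1.2 - B.1.2 * A.1.2),
        comm_mem_glZero d A.1 B.1 A.2 B.2⟩)
      (fun A D => A.1.2 ∘ₗ D - D ∘ₗ A.1.1)
      (fun _ _ _ => (0 : g0 →ₗ[K] g1))
      -- the adjoint representation
      (fun x => ⟨(l2 x, l2m x),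
        (mem_glZero_iff d _).mpr (by ext a; exact (h.ax_chain x a).symm)⟩)
      (fun a => - l2m.flip a)
      (fun x y => - l3 x y) := by
  exact
    { f0_lin := ⟨fun x y => Subtype.ext (by simp), fun c x => Subtype.ext (by simp)⟩
      f1_lin := ⟨fun a b => by simp [add_comm], fun c a => by simp⟩
      f2_lin := fun x => ⟨fun y z => by simp [add_comm], fun c y => by simp⟩
      f2_skew := fun x y => by ext z; simp [h.l3_skew12 x y z]
      chain := fun a => Subtype.ext (h.adjoint_chain a)
      hom2 := fun x y => Subtype.ext (h.adjoint_bracket x y)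
      hom2m := h.adjoint_action
      hom3 := fun x y z => (sub_zero _).trans (h.adjoint_homotopy x y z) }
end

section
/- Let $(\mathfrak{g},[\cdot,\cdot]_\mathfrak{g})$ be a Lie algebra with a 2-term representation up to homotopy on $V_{-1}\xrightarrow{\partial}V_0$, given by $(\phi_0,\phi_1,\phi_2)$. Define on $V_{-1}\xrightarrow{(0,\partial)}\mathfrak{g}\oplus V_0$ the brackets $l_2(x+u,y+v)=[x,y]_\mathfrak{g}+x\triangleright v-y\triangleright u$, $l_2(x+u,m)=x\triangleright m$, and $l_3(x+u,y+v,z+w)=-(x,y)\triangleright w-(y,z)\triangleright u-(z,x)\triangleright v$, where $x\triangleright(\cdot)=\phi_0(x)$ and $(x,y)\triangleright(\cdot)=\phi_2(x,y)$. Then this is a 2-term $L_\infty$-algebra (the semidirect product). -/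
theorem IsLinearMap.of_antisymm {R M N : Type*} [Semiring R] [AddCommGroup M] [Module R M]
    [AddCommGroup N] [Module R N] {B : M → M → N} (hB : ∀ x, IsLinearMap R (B x))
    (hskew : ∀ x y, B x y = -B y x) (y : M) : IsLinearMap R (fun x => B x y) := by
  simp_rw [hskew _ y]
  exact ⟨fun a b => by rw [(hB y).map_add, neg_add],
    fun c a => by rw [(hB y).map_smul, smul_neg]⟩

def LinearMap.mk₂OfAntisymm {R M N : Type*} [CommSemiring R] [AddCommGroup M] [Module R M]
    [AddCommGroup N] [Module R N] (B : M → M → N) (hB : ∀ x, IsLinearMap R (B x))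
    (hskew : ∀ x y, B x y = -B y x) : M →ₗ[R] M →ₗ[R] N :=
  LinearMap.mk₂ R B (fun _ _ y => (IsLinearMap.of_antisymm hB hskew y).map_add _ _)
    (fun c _ y => (IsLinearMap.of_antisymm hB hskew y).map_smul c _)
    (fun x => (hB x).map_add) (fun c x => (hB x).map_smul c)

section SemidirectProduct

variable {K g V0 V1 : Type*} [Field K] [LieRing g] [LieAlgebra K g]
  [AddCommGroup V0] [Module K V0] [AddCommGroup V1] [Module K V1]

def semidirectDiff (p : V1 →ₗ[K] V0) (m : V1) : g × V0 := (0, p m)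

def semidirectBracket (φ0 : g →ₗ[K] Module.End K V0 × Module.End K V1) (e f : g × V0) :
    g × V0 :=
  (⁅e.1, f.1⁆, (φ0 e.1).1 f.2 - (φ0 f.1).1 e.2)

def semidirectAction (φ0 : g →ₗ[K] Module.End K V0 × Module.End K V1) (e : g × V0) (m : V1) :
    V1 :=
  (φ0 e.1).2 m

def semidirectL3 (φ2 : g →ₗ[K] g →ₗ[K] V0 →ₗ[K] V1) (e f r : g × V0) : V1 :=
  - φ2 e.1 f.1 r.2 - φ2 f.1 r.1 e.2 - φ2 r.1 e.1 f.2

variable (p : V1 →ₗ[K] V0) (φ0 : g →ₗ[K] Module.End K V0 × Module.End K V1)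
  (φ2 : g →ₗ[K] g →ₗ[K] V0 →ₗ[K] V1)

theorem semidirectDiff_isLinearMap : IsLinearMap K (semidirectDiff (g := g) p) :=
  (LinearMap.inr K g V0 ∘ₗ p).isLinear

theorem semidirectBracket_isLinearMap (e : g × V0) : IsLinearMap K (semidirectBracket φ0 e) :=
  ⟨fun f f' => by
    simp only [semidirectBracket, Prod.fst_add, Prod.snd_add, lie_add, map_add,
      LinearMap.add_apply, Prod.mk_add_mk, Prod.mk.injEq, true_and]
    abel,
  fun c f => by simp [semidirectBracket, smul_sub]⟩

theorem semidirectBracket_antisymm (e f : g × V0) :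
    semidirectBracket φ0 e f = -semidirectBracket φ0 f e := by
  simp only [semidirectBracket, Prod.neg_mk, ← lie_skew f.1, neg_neg, neg_sub]

theorem semidirectAction_isLinearMap_left (m : V1) :
    IsLinearMap K (fun e => semidirectAction φ0 e m) :=
  ⟨fun e e' => by simp [semidirectAction], fun c e => by simp [semidirectAction]⟩

theorem semidirectL3_isLinearMap (e f : g × V0) : IsLinearMap K (semidirectL3 φ2 e f) :=
  ⟨fun r r' => by simp only [semidirectL3, Prod.fst_add, Prod.snd_add, map_add,
      LinearMap.add_apply]; abel,
    fun c r => by simp only [semidirectL3, Prod.smul_fst, Prod.smul_snd, map_smul,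
      LinearMap.smul_apply, smul_sub, smul_neg]⟩

theorem semidirectL3_cycle (e f r : g × V0) :
    semidirectL3 φ2 e f r = semidirectL3 φ2 f r e := by
  simp only [semidirectL3]; abel

variable {p φ0 φ2}

theorem semidirectL3_antisymm_left (hskew : ∀ x y, φ2 x y = -φ2 y x) (e f r : g × V0) :
    semidirectL3 φ2 e f r = -semidirectL3 φ2 f e r := by
  simp only [semidirectL3]
  rw [hskew f.1 e.1, hskew e.1 r.1, hskew r.1 f.1]
  simp only [LinearMap.neg_apply]; abel

theorem semidirectL3_antisymm_right (hskew : ∀ x y, φ2 x y = -φ2 y x) (e f r : g × V0) :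
    semidirectL3 φ2 e f r = -semidirectL3 φ2 e r f := by
  rw [semidirectL3_cycle φ2 e f r, semidirectL3_antisymm_left hskew,
    ← semidirectL3_cycle φ2 e r f]

theorem semidirectDiff_semidirectAction
    (hchain : ∀ x : g, (φ0 x).1 ∘ₗ p = p ∘ₗ (φ0 x).2)
    (e : g × V0) (a : V1) :
    semidirectDiff p (semidirectAction φ0 e a) = semidirectBracket φ0 e (semidirectDiff p a) := by
  have := LinearMap.congr_fun (hchain e.1) a
  simp only [LinearMap.comp_apply] at this
  simp [semidirectDiff, semidirectAction, semidirectBracket, this]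

variable (p φ0) in
theorem semidirectAction_semidirectDiff (a b : V1) :
    semidirectAction φ0 (semidirectDiff p a) b = -semidirectAction φ0 (semidirectDiff p b) a := by
  simp [semidirectAction, semidirectDiff]

theorem semidirectBracket_jacobi
    (hrep : ∀ x y : g,
      (φ0 ⁅x, y⁆).1 - ((φ0 x).1 * (φ0 y).1 - (φ0 y).1 * (φ0 x).1) = p ∘ₗ φ2 x y)
    (e f r : g × V0) :
    semidirectBracket φ0 (semidirectBracket φ0 e f) r
      + semidirectBracket φ0 (semidirectBracket φ0 f r) e
      + semidirectBracket φ0 (semidirectBracket φ0 r e) f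
      = -semidirectDiff p (semidirectL3 φ2 e f r) := by
  have hrep_apply (x y : g) (v : V0) :
      (φ0 ⁅x, y⁆).1 v = (φ0 x).1 ((φ0 y).1 v) - (φ0 y).1 ((φ0 x).1 v) + p (φ2 x y v) := by
    have := LinearMap.congr_fun (hrep x y) v
    simp only [LinearMap.sub_apply, Module.End.mul_apply, LinearMap.comp_apply] at this
    linear_combination (norm := module) this
  obtain ⟨x, u⟩ := e
  obtain ⟨y, v⟩ := f
  obtain ⟨z, w⟩ := r
  simp only [semidirectBracket, semidirectDiff, semidirectL3, Prod.mk_add_mk, Prod.neg_mk,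
    Prod.mk.injEq]
  constructor
  · rw [← lie_skew ⁅x, y⁆ z, ← lie_skew ⁅y, z⁆ x, ← lie_skew ⁅z, x⁆ y]
    linear_combination (norm := module) -lie_jacobi x y z
  · simp only [hrep_apply, map_sub, map_neg]
    module

theorem semidirectAction_jacobi
    (hrep : ∀ x y : g,
      (φ0 ⁅x, y⁆).2 - ((φ0 x).2 * (φ0 y).2 - (φ0 y).2 * (φ0 x).2) = φ2 x y ∘ₗ p)
    (e f : g × V0) (a : V1) :
    semidirectAction φ0 (semidirectBracket φ0 e f) a
      - semidirectAction φ0 e (semidirectAction φ0 f a)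
      + semidirectAction φ0 f (semidirectAction φ0 e a)
      = -semidirectL3 φ2 e f (semidirectDiff p a) := by
  have := LinearMap.congr_fun (hrep e.1 f.1) a
  simp only [LinearMap.sub_apply, Module.End.mul_apply, LinearMap.comp_apply] at this
  simp only [semidirectAction, semidirectBracket, semidirectL3, semidirectDiff, map_zero,
    LinearMap.zero_apply]
  linear_combination (norm := module) this

theorem semidirectL3_cocycle (hskew : ∀ x y, φ2 x y = -φ2 y x)
    (hcocycle : ∀ x y z : g,
      ((φ0 x).2 ∘ₗ φ2 y z - φ2 y z ∘ₗ (φ0 x).1)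
      + ((φ0 y).2 ∘ₗ φ2 z x - φ2 z x ∘ₗ (φ0 y).1)
      + ((φ0 z).2 ∘ₗ φ2 x y - φ2 x y ∘ₗ (φ0 z).1)
      - φ2 ⁅x, y⁆ z - φ2 ⁅y, z⁆ x - φ2 ⁅z, x⁆ y = 0)
    (w x y z : g × V0) :
    semidirectL3 φ2 (semidirectBracket φ0 w x) y z
      - semidirectL3 φ2 (semidirectBracket φ0 w y) x z
      + semidirectL3 φ2 (semidirectBracket φ0 w z) x y
      + semidirectL3 φ2 (semidirectBracket φ0 x y) w z
      + semidirectL3 φ2 (semidirectBracket φ0 y z) w x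
      - semidirectL3 φ2 (semidirectBracket φ0 x z) w y
      + semidirectAction φ0 z (semidirectL3 φ2 w x y)
      + semidirectAction φ0 x (semidirectL3 φ2 w y z)
      - semidirectAction φ0 y (semidirectL3 φ2 w x z)
      - semidirectAction φ0 w (semidirectL3 φ2 x y z)
      = 0 := by
  have hcocycle_apply (a b c : g) (v : V0) :
      (φ0 a).2 (φ2 b c v) - φ2 b c ((φ0 a).1 v) - (φ0 b).2 (φ2 a c v) + φ2 a c ((φ0 b).1 v)
        + (φ0 c).2 (φ2 a b v) - φ2 a b ((φ0 c).1 v)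
        - φ2 ⁅a, b⁆ c v - φ2 ⁅b, c⁆ a v + φ2 ⁅a, c⁆ b v = 0 := by
    have h := LinearMap.congr_fun (hcocycle a b c) v
    rw [hskew c a, ← lie_skew c a] at h
    simp only [LinearMap.add_apply, LinearMap.sub_apply, LinearMap.comp_apply,
      LinearMap.zero_apply, LinearMap.neg_apply, map_neg] at h
    linear_combination (norm := module) h
  obtain ⟨w1, w2⟩ := w
  obtain ⟨x1, x2⟩ := x
  obtain ⟨y1, y2⟩ := y
  obtain ⟨z1, z2⟩ := z
  simp only [semidirectL3, semidirectBracket, semidirectAction, map_sub, map_neg]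
  -- orient every `φ2 s t` along `w, x, y, z`, as in `hcocycle_apply`
  rw [hskew y1 w1, hskew z1 w1, hskew z1 x1, hskew z1 ⁅w1, x1⁆, hskew z1 ⁅w1, y1⁆,
    hskew y1 ⁅w1, z1⁆, hskew z1 ⁅x1, y1⁆, hskew x1 ⁅y1, z1⁆, hskew y1 ⁅x1, z1⁆]
  simp only [LinearMap.neg_apply, map_neg]
  linear_combination (norm := module) hcocycle_apply w1 x1 y1 z2 + hcocycle_apply w1 y1 z1 x2
    - hcocycle_apply w1 x1 z1 y2 - hcocycle_apply x1 y1 z1 w2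

theorem isL2Alg_semidirect (hchain : ∀ x : g, (φ0 x).1 ∘ₗ p = p ∘ₗ (φ0 x).2)
    (hskew : ∀ x y, φ2 x y = -φ2 y x)
    (hrep0 : ∀ x y : g,
      (φ0 ⁅x, y⁆).1 - ((φ0 x).1 * (φ0 y).1 - (φ0 y).1 * (φ0 x).1) = p ∘ₗ φ2 x y)
    (hrep1 : ∀ x y : g,
      (φ0 ⁅x, y⁆).2 - ((φ0 x).2 * (φ0 y).2 - (φ0 y).2 * (φ0 x).2) = φ2 x y ∘ₗ p)
    (hcocycle : ∀ x y z : g,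
      ((φ0 x).2 ∘ₗ φ2 y z - φ2 y z ∘ₗ (φ0 x).1)
      + ((φ0 y).2 ∘ₗ φ2 z x - φ2 z x ∘ₗ (φ0 y).1)
      + ((φ0 z).2 ∘ₗ φ2 x y - φ2 x y ∘ₗ (φ0 z).1)
      - φ2 ⁅x, y⁆ z - φ2 ⁅y, z⁆ x - φ2 ⁅z, x⁆ y = 0) :
    IsL2Alg K (semidirectDiff p) (semidirectBracket φ0) (semidirectAction φ0)
      (semidirectL3 φ2) where
  d_lin := semidirectDiff_isLinearMap p
  l2_lin := semidirectBracket_isLinearMap φ0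
  l2_lin' :=
    IsLinearMap.of_antisymm (semidirectBracket_isLinearMap φ0) (semidirectBracket_antisymm φ0)
  l2m_lin e := (φ0 e.1).2.isLinear
  l2m_lin' := semidirectAction_isLinearMap_left φ0
  l3_lin := semidirectL3_isLinearMap φ2
  l3_lin' f r := by
    simp only [semidirectL3_cycle φ2 _ f r]
    exact semidirectL3_isLinearMap φ2 f r
  l2_skew := semidirectBracket_antisymm φ0
  l3_skew12 := semidirectL3_antisymm_left hskew
  l3_skew23 := semidirectL3_antisymm_right hskew
  ax_chain := semidirectDiff_semidirectAction hchain
  ax_mixed := semidirectAction_semidirectDiff p φ0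
  ax_jac0 := semidirectBracket_jacobi hrep0
  ax_jac1 := semidirectAction_jacobi hrep1
  ax_l3 := semidirectL3_cocycle hskew hcocycle

end SemidirectProduct

theorem semidirect_product_L2Alg_general
    (K : Type*) [Field K]
    (g : Type*) [LieRing g] [LieAlgebra K g]
    {V0 V1 : Type*} [AddCommGroup V0] [Module K V0] [AddCommGroup V1] [Module K V1]
    (p : V1 →ₗ[K] V0)
    -- the representation up to homotopy (φ0, φ2)
    (φ0 : g → Module.End K V0 × Module.End K V1)
    (hφ0lin : IsLinearMap K φ0)
    (hφ0chain : ∀ x : g, (φ0 x).1 ∘ₗ p = p ∘ₗ (φ0 x).2)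
    (φ2 : g → g → (V0 →ₗ[K] V1))
    (hφ2lin : ∀ x, IsLinearMap K (φ2 x))
    (hφ2skew : ∀ x y, φ2 x y = - φ2 y x)
    -- φ0 is a homomorphism up to δφ2
    (hrep1 : ∀ x y : g,
      (φ0 ⁅x, y⁆).1 - ((φ0 x).1 * (φ0 y).1 - (φ0 y).1 * (φ0 x).1) = p ∘ₗ φ2 x y
      ∧ (φ0 ⁅x, y⁆).2 - ((φ0 x).2 * (φ0 y).2 - (φ0 y).2 * (φ0 x).2) = φ2 x y ∘ₗ p)
    -- cocycle-type condition
    (hrep2 : ∀ x y z : g,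
      ((φ0 x).2 ∘ₗ φ2 y z - φ2 y z ∘ₗ (φ0 x).1)
      + ((φ0 y).2 ∘ₗ φ2 z x - φ2 z x ∘ₗ (φ0 y).1)
      + ((φ0 z).2 ∘ₗ φ2 x y - φ2 x y ∘ₗ (φ0 z).1)
      - φ2 ⁅x, y⁆ z - φ2 ⁅y, z⁆ x - φ2 ⁅z, x⁆ y = 0) :
    IsL2Alg K (g0 := g × V0) (g1 := V1)
      (fun m => ((0 : g), p m))
      (fun e f => (⁅e.1, f.1⁆, (φ0 e.1).1 f.2 - (φ0 f.1).1 e.2))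
      (fun e m => (φ0 e.1).2 m)
      (fun e f r => - φ2 e.1 f.1 r.2 - φ2 f.1 r.1 e.2 - φ2 r.1 e.1 f.2) :=
  isL2Alg_semidirect (φ0 := hφ0lin.mk' φ0)
    (φ2 := LinearMap.mk₂OfAntisymm φ2 hφ2lin hφ2skew)
    hφ0chain hφ2skew (fun x y => (hrep1 x y).1) (fun x y => (hrep1 x y).2) hrep2

/-- The semidirect product of a Lie algebra with a 2-term representation up to homotopy is a
2-term L∞-algebra. -/
theorem semidirect_product_L2Alg
    (K : Type*) [Field K]
    (g : Type*) [LieRing g] [LieAlgebra K g]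
    {V0 V1 : Type*} [AddCommGroup V0] [Module K V0] [AddCommGroup V1] [Module K V1]
    (p : V1 →ₗ[K] V0)
    -- the representation up to homotopy (φ0, φ2)
    (φ0 : g → Module.End K V0 × Module.End K V1)
    (hφ0lin : IsLinearMap K φ0)
    (hφ0chain : ∀ x : g, (φ0 x).1 ∘ₗ p = p ∘ₗ (φ0 x).2)
    (φ2 : g → g → (V0 →ₗ[K] V1))
    (hφ2lin : ∀ x, IsLinearMap K (φ2 x)) (hφ2lin' : ∀ y, IsLinearMap K (fun x => φ2 x y))
    (hφ2skew : ∀ x y, φ2 x y = - φ2 y x)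
    -- φ0 is a homomorphism up to δφ2
    (hrep1 : ∀ x y : g,
      (φ0 ⁅x, y⁆).1 - ((φ0 x).1 * (φ0 y).1 - (φ0 y).1 * (φ0 x).1) = p ∘ₗ φ2 x y
      ∧ (φ0 ⁅x, y⁆).2 - ((φ0 x).2 * (φ0 y).2 - (φ0 y).2 * (φ0 x).2) = φ2 x y ∘ₗ p)
    -- cocycle-type condition
    (hrep2 : ∀ x y z : g,
      ((φ0 x).2 ∘ₗ φ2 y z - φ2 y z ∘ₗ (φ0 x).1)
      + ((φ0 y).2 ∘ₗ φ2 z x - φ2 z x ∘ₗ (φ0 y).1)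
      + ((φ0 z).2 ∘ₗ φ2 x y - φ2 x y ∘ₗ (φ0 z).1)
      - φ2 ⁅x, y⁆ z - φ2 ⁅y, z⁆ x - φ2 ⁅z, x⁆ y = 0) :
    IsL2Alg K (g0 := g × V0) (g1 := V1)
      (fun m => ((0 : g), p m))
      (fun e f => (⁅e.1, f.1⁆, (φ0 e.1).1 f.2 - (φ0 f.1).1 e.2))
      (fun e m => (φ0 e.1).2 m)
      (fun e f r => - φ2 e.1 f.1 r.2 - φ2 f.1 r.1 e.2 - φ2 r.1 e.1 f.2) :=
  semidirect_product_L2Alg_general K g p φ0 hφ0lin hφ0chain φ2 hφ2lin hφ2skew hrep1 hrep2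
end
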